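/- arXiv:2109.12837 — 6 statements merged into one kernel-verified Lean document; each statement's English description precedes it below -/
import Mathlib

section
/- Let f : X × Y → Z be a continuous map, where Z × Y is a k-space. Then the map F : X × Y → Z × Y defined by F(x,y) = (f(x,y), y) is proper (i.e. closed with compact fibers) if and only if for all compact subsets C ⊆ Z and B ⊆ Y, the set A = {a ∈ X : ∃ b ∈ B, f(a,b) ∈ C} is compact. -/
/-!
Since `Z × Y` is Hausdorff and compactly generated, `F(x, y) = (f(x, y), y)` is proper iff
`F⁻¹(K)` is compact for every compact `K`. The set `{a | ∃ b ∈ B, f(a, b) ∈ C}` is the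
projection of `F⁻¹(C × B)` to `X`; conversely `F⁻¹(K)` is a closed subset of `A × B`, where
`B` and `C` are the projections of `K` and `A` is the set built from them.
-/

section

variable {X Y Z : Type*}

theorem fst_image_preimage_prod_snd (f : X × Y → Z) (C : Set Z) (B : Set Y) :
    Prod.fst '' ((fun p : X × Y => (f p, p.2)) ⁻¹' (C ×ˢ B)) = {a | ∃ b ∈ B, f (a, b) ∈ C} := by
  ext a
  constructor
  · rintro ⟨⟨a, b⟩, ⟨hfb, hb⟩, rfl⟩
    exact ⟨b, hb, hfb⟩
  · rintro ⟨b, hb, hfb⟩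
    exact ⟨(a, b), ⟨hfb, hb⟩, rfl⟩

theorem preimage_prod_snd_subset (f : X × Y → Z) (K : Set (Z × Y)) :
    (fun p : X × Y => (f p, p.2)) ⁻¹' K ⊆
      {a | ∃ b ∈ Prod.snd '' K, f (a, b) ∈ Prod.fst '' K} ×ˢ (Prod.snd '' K) := by
  rintro ⟨a, b⟩ hK
  exact ⟨⟨b, ⟨_, hK, rfl⟩, ⟨_, hK, rfl⟩⟩, ⟨_, hK, rfl⟩⟩

variable [TopologicalSpace X] [TopologicalSpace Y] [TopologicalSpace Z]

theorem forall_isCompact_preimage_prod_snd_iff [T2Space Y] [T2Space Z]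
    {f : X × Y → Z} (hf : Continuous f) :
    (∀ ⦃K : Set (Z × Y)⦄, IsCompact K → IsCompact ((fun p : X × Y => (f p, p.2)) ⁻¹' K)) ↔
      ∀ C : Set Z, ∀ B : Set Y, IsCompact C → IsCompact B →
        IsCompact {a : X | ∃ b ∈ B, f (a, b) ∈ C} := by
  constructor
  · intro h C B hC hB
    rw [← fst_image_preimage_prod_snd]
    exact (h (hC.prod hB)).image continuous_fst
  · intro h K hK
    have hB : IsCompact (Prod.snd '' K) := hK.image continuous_snd
    have hA := h _ _ (hK.image continuous_fst) hB
    exact (hA.prod hB).of_isClosed_subset (hK.isClosed.preimage (hf.prodMk continuous_snd))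
      (preimage_prod_snd_subset f K)

end

theorem stmt_0_general {X Y Z : Type*} [TopologicalSpace X] [TopologicalSpace Y] [TopologicalSpace Z]
    [T2Space Y] [T2Space Z] [CompactlyGeneratedSpace (Z × Y)]
    (f : X × Y → Z) (hf : Continuous f) :
    IsProperMap (fun p : X × Y => (f p, p.2)) ↔
      ∀ C : Set Z, ∀ B : Set Y, IsCompact C → IsCompact B →
        IsCompact {a : X | ∃ b ∈ B, f (a, b) ∈ C} := by
  rw [isProperMap_iff_isCompact_preimage, ← forall_isCompact_preimage_prod_snd_iff hf]
  exact and_iff_right (hf.prodMk continuous_snd)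

/-- Let `f : X × Y → Z` be a continuous map, where `Z × Y` is a k-space (compactly
generated). Then the map `F : X × Y → Z × Y`, `F(x,y) = (f(x,y), y)` is proper if and
only if for all compact `C ⊆ Z` and `B ⊆ Y`, the set
`{a ∈ X | ∃ b ∈ B, f(a,b) ∈ C}` is compact. -/
theorem stmt_0 {X Y Z : Type*} [TopologicalSpace X] [TopologicalSpace Y] [TopologicalSpace Z]
    [T2Space X] [T2Space Y] [T2Space Z] [CompactlyGeneratedSpace (Z × Y)]
    (f : X × Y → Z) (hf : Continuous f) :
    IsProperMap (fun p : X × Y => (f p, p.2)) ↔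
      ∀ C : Set Z, ∀ B : Set Y, IsCompact C → IsCompact B →
        IsCompact {a : X | ∃ b ∈ B, f (a, b) ∈ C} :=
  stmt_0_general f hf
end

section
/- Let f : X × Y → Y be continuous with F(x,y) = (f(x,y), y) proper, suppose f is an open map, and suppose the relation y ∼ f(x,y) (for all x) is an equivalence relation on Y. Then the quotient map q : Y → Y/∼ is open and the quotient space Y/∼ is Hausdorff. -/
/-!
The saturation of a set `U ⊆ Y` is `f '' (univ ×ˢ U)`, which is open when `U` is, so the
quotient map is open. The relation, as a subset of `Y × Y`, is the range of the proper (hence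
closed) map `(x, y) ↦ (f (x, y), y)`, so it is closed; for an open quotient map this is
equivalent to the quotient being Hausdorff.
-/

open Set

section OrbitRelation

variable {X Y : Type*} {f : X × Y → Y} {s : Setoid Y}

theorem Setoid.preimage_image_mk_eq_image_univ_prod
    (hs : ∀ y y' : Y, s.r y y' ↔ ∃ x : X, f (x, y) = y') (U : Set Y) :
    Quotient.mk s ⁻¹' (Quotient.mk s '' U) = f '' (univ ×ˢ U) := by
  ext z
  simp only [mem_preimage, mem_image, Quotient.eq, mem_prod, mem_univ, true_and, Prod.exists]
  constructor
  · rintro ⟨u, hu, huz⟩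
    obtain ⟨x, rfl⟩ := (hs u z).mp huz
    exact ⟨x, u, hu, rfl⟩
  · rintro ⟨x, u, hu, rfl⟩
    exact ⟨u, hu, (hs u _).mpr ⟨x, rfl⟩⟩

theorem Setoid.setOf_mk_eq_mk_eq_range
    (hs : ∀ y y' : Y, s.r y y' ↔ ∃ x : X, f (x, y) = y') :
    {q : Y × Y | Quotient.mk s q.1 = Quotient.mk s q.2} = range (fun p : X × Y => (f p, p.2)) := by
  ext ⟨a, b⟩
  simp only [mem_ofPred_eq, Quotient.eq, mem_range, Prod.exists, Prod.mk.injEq]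
  rw [s.comm', hs]
  constructor
  · rintro ⟨x, hx⟩
    exact ⟨x, b, hx, rfl⟩
  · rintro ⟨x, _, hx, rfl⟩
    exact ⟨x, hx⟩

variable [TopologicalSpace X] [TopologicalSpace Y]

theorem Setoid.isOpenQuotientMap_mk_of_isOpenMap
    (hs : ∀ y y' : Y, s.r y y' ↔ ∃ x : X, f (x, y) = y') (hopen : IsOpenMap f) :
    IsOpenQuotientMap (Quotient.mk s) := by
  refine ⟨Quotient.mk_surjective, continuous_quotient_mk', fun U hU => ?_⟩
  have hsat : IsOpen (Quotient.mk s ⁻¹' (Quotient.mk s '' U)) := by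
    rw [preimage_image_mk_eq_image_univ_prod hs]
    exact hopen _ (isOpen_univ.prod hU)
  exact isQuotientMap_quotient_mk'.isOpen_preimage.mp hsat

end OrbitRelation

theorem stmt_3_general {X Y : Type*} [TopologicalSpace X] [TopologicalSpace Y]
    (f : X × Y → Y) (hF : IsProperMap (fun p : X × Y => (f p, p.2)))
    (hopen : IsOpenMap f)
    (s : Setoid Y) (hs : ∀ y y' : Y, s.r y y' ↔ ∃ x : X, f (x, y) = y') :
    IsOpenMap (Quotient.mk s) ∧ T2Space (Quotient s) := by
  have hq := Setoid.isOpenQuotientMap_mk_of_isOpenMap hs hopen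
  refine ⟨hq.isOpenMap, ?_⟩
  rw [t2Space_iff_of_isOpenQuotientMap hq, Setoid.setOf_mk_eq_mk_eq_range hs]
  exact hF.isClosed_range

/-- Let `f : X × Y → Y` be continuous with `F(x,y) = (f(x,y), y)` proper, suppose `f`
is an open map, and suppose `y ∼ f(x,y)` is an equivalence relation on `Y`. Then the
quotient map `q : Y → Y/∼` is open and `Y/∼` is Hausdorff. -/
theorem stmt_3 {X Y : Type*} [TopologicalSpace X] [TopologicalSpace Y]
    [T2Space X] [T2Space Y]
    (f : X × Y → Y) (hF : IsProperMap (fun p : X × Y => (f p, p.2)))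
    (hopen : IsOpenMap f)
    (s : Setoid Y) (hs : ∀ y y' : Y, s.r y y' ↔ ∃ x : X, f (x, y) = y') :
    IsOpenMap (Quotient.mk s) ∧ T2Space (Quotient s) :=
  stmt_3_general f hF hopen s hs
end

section
/- Let G be a topological group acting continuously on a topological space X that is first countable or locally compact. Then the action is proper (i.e. the map G × X → X × X, (g,x) ↦ (gx, x), is proper) if and only if for all compact subsets B, C ⊆ X, the set {g ∈ G : g(B) ∩ C ≠ ∅} is compact. -/
theorem stmt_4_general {G X : Type*} [Group G] [TopologicalSpace G]
    [TopologicalSpace X] [T2Space X] [MulAction G X] [ContinuousSMul G X]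
    (hX : FirstCountableTopology X ∨ LocallyCompactSpace X) :
    IsProperMap (fun p : G × X => (p.1 • p.2, p.2)) ↔
      ∀ B C : Set X, IsCompact B → IsCompact C →
        IsCompact {g : G | ((g • ·) '' B) ∩ C ≠ ∅} := by
  -- Either hypothesis makes `X × X` a k-space, where proper means compact preimages of compacts.
  have : CompactlyGeneratedSpace (X × X) := hX.elim (fun _ ↦ inferInstance) fun _ ↦ inferInstance
  simp only [Set.image_smul, ← Set.nonempty_iff_ne_empty]
  rw [← properSMul_iff, MulAction.properSMul_iff_isCompact_setOfPred_inter_nonempty]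

/-- Let `G` be a topological group acting continuously on a space `X` that is first
countable or locally compact. Then the action is proper iff for all compact
`B, C ⊆ X` the set `{g | gB ∩ C ≠ ∅}` is compact. -/
theorem stmt_4 {G X : Type*} [Group G] [TopologicalSpace G] [IsTopologicalGroup G]
    [T2Space G] [TopologicalSpace X] [T2Space X] [MulAction G X] [ContinuousSMul G X]
    (hX : FirstCountableTopology X ∨ LocallyCompactSpace X) :
    IsProperMap (fun p : G × X => (p.1 • p.2, p.2)) ↔
      ∀ B C : Set X, IsCompact B → IsCompact C →
        IsCompact {g : G | ((g • ·) '' B) ∩ C ≠ ∅} :=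
  stmt_4_general hX
end

section
/- Let G act continuously on X and K act continuously on Y, with α : G → K a continuous homomorphism and f : X → Y a proper equivariant map. If α is a closed map with compact kernel and the K-action on Y is proper, then the G-action on X is proper. -/
/-!
Equivariance says that `(g, x) ↦ (g • x, x)` followed by `f × f` equals `α × f` followed by
the `K`-action map `(k, y) ↦ (k • y, y)`. A closed homomorphism with compact kernel is proper,
since its fibres are cosets of the kernel; so the latter composite is proper, and a continuous
map whose composite with a continuous map is proper has a proper first factor once its
codomain `X × X` is Hausdorff.
-/

open Pointwise

theorem MonoidHom.preimage_singleton_eq_smul_ker {G K : Type*} [Group G] [Group K]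
    (α : G →* K) (g : G) : α ⁻¹' {α g} = g • (α.ker : Set G) := by
  ext x
  rw [mem_leftCoset_iff, Set.mem_preimage, Set.mem_singleton_iff, SetLike.mem_coe,
    MonoidHom.mem_ker, map_mul, map_inv, inv_mul_eq_one, eq_comm]

theorem MonoidHom.isProperMap_of_isClosedMap {G K : Type*} [Group G] [TopologicalSpace G]
    [ContinuousConstSMul G G] [Group K] [TopologicalSpace K] (α : G →* K) (hα : Continuous α)
    (hclosed : IsClosedMap α) (hker : IsCompact (α.ker : Set G)) : IsProperMap α := by
  refine isProperMap_iff_isClosedMap_and_compact_fibers.mpr ⟨hα, hclosed, fun k => ?_⟩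
  rcases Set.eq_empty_or_nonempty (α ⁻¹' {k}) with hempty | ⟨g, rfl⟩
  · exact hempty ▸ isCompact_empty
  · exact α.preimage_singleton_eq_smul_ker g ▸ hker.smul g

theorem ProperSMul.of_isProperMap_equivariant {G K X Y : Type*} [Group G] [TopologicalSpace G]
    [Group K] [TopologicalSpace K] [TopologicalSpace X] [T2Space X] [TopologicalSpace Y]
    [MulAction G X] [ContinuousSMul G X] [MulAction K Y] [ProperSMul K Y]
    {α : G → K} {f : X → Y} (hα : IsProperMap α) (hf : IsProperMap f)
    (hequiv : ∀ (g : G) (x : X), f (g • x) = α g • f x) : ProperSMul G X := by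
  have hsemiconj : Prod.map f f ∘ (fun p : G × X => (p.1 • p.2, p.2)) =
      (fun p : K × Y => (p.1 • p.2, p.2)) ∘ Prod.map α f := by
    funext p
    simp only [Function.comp_apply, Prod.map, hequiv]
  refine ⟨isProperMap_of_comp_of_t2 (by fun_prop) (hf.continuous.prodMap hf.continuous) ?_⟩
  rw [hsemiconj]
  exact ProperSMul.isProperMap_smul_pair.comp (hα.prodMap hf)

theorem stmt_8_general {G K X Y : Type*} [Group G] [TopologicalSpace G] [IsTopologicalGroup G]
    [Group K] [TopologicalSpace K]
    [TopologicalSpace X] [T2Space X] [TopologicalSpace Y]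
    [MulAction G X] [ContinuousSMul G X] [MulAction K Y]
    (α : G →* K) (hα : Continuous α) (hclosed : IsClosedMap (α : G → K))
    (hker : IsCompact (α.ker : Set G))
    (f : X → Y) (hf : IsProperMap f) (hequiv : ∀ (g : G) (x : X), f (g • x) = α g • f x)
    (hK : IsProperMap (fun p : K × Y => (p.1 • p.2, p.2))) :
    IsProperMap (fun p : G × X => (p.1 • p.2, p.2)) :=
  have : ProperSMul K Y := ⟨hK⟩
  (ProperSMul.of_isProperMap_equivariant (α.isProperMap_of_isClosedMap hα hclosed hker) hf
    hequiv).isProperMap_smul_pair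

/-- With `α : G → K` a continuous homomorphism and `f : X → Y` a proper equivariant
map: if `α` is closed with compact kernel and the `K`-action on `Y` is proper, then
the `G`-action on `X` is proper. -/
theorem stmt_8 {G K X Y : Type*} [Group G] [TopologicalSpace G] [IsTopologicalGroup G]
    [Group K] [TopologicalSpace K] [IsTopologicalGroup K] [T2Space G] [T2Space K]
    [TopologicalSpace X] [T2Space X] [TopologicalSpace Y] [T2Space Y]
    [MulAction G X] [ContinuousSMul G X] [MulAction K Y] [ContinuousSMul K Y]
    (α : G →* K) (hα : Continuous α) (hclosed : IsClosedMap (α : G → K))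
    (hker : IsCompact (α.ker : Set G))
    (f : X → Y) (hf : IsProperMap f) (hequiv : ∀ (g : G) (x : X), f (g • x) = α g • f x)
    (hK : IsProperMap (fun p : K × Y => (p.1 • p.2, p.2))) :
    IsProperMap (fun p : G × X => (p.1 • p.2, p.2)) :=
  stmt_8_general α hα hclosed hker f hf hequiv hK
end

section
/- Let X be a proper metric space (closed bounded sets are compact). Then the map IE(X) × X → X × X, (g,x) ↦ (gx, x), is a proper map, where IE(X) is the monoid of isometric embeddings with the topology of pointwise convergence. In particular, IE(X) is locally compact. -/
open Metric Set Filter Topology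

section Isometries

variable {X Y : Type*}

lemma isClosed_setOf_isometry [PseudoEMetricSpace X] [PseudoEMetricSpace Y] :
    IsClosed {f : X → Y | Isometry f} := by
  simp only [Isometry, ofPred_forall]
  exact isClosed_iInter fun a => isClosed_iInter fun b =>
    isClosed_eq ((continuous_apply a).edist (continuous_apply b)) continuous_const

lemma continuous_isometry_apply [PseudoEMetricSpace X] [PseudoEMetricSpace Y] (x : X) :
    Continuous fun g : {f : X → Y // Isometry f} => g.1 x :=
  (continuous_apply x).comp continuous_subtype_val

variable [PseudoMetricSpace X] [PseudoMetricSpace Y]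

/-- Evaluation is jointly continuous on isometries, since they form an equicontinuous family. -/
lemma continuous_isometry_eval :
    Continuous fun p : {f : X → Y // Isometry f} × X => p.1.1 p.2 := by
  refine continuous_iff_continuousAt.2 fun ⟨g₀, x₀⟩ => tendsto_iff_dist_tendsto_zero.2 ?_
  have hbound : Tendsto (fun p : {f : X → Y // Isometry f} × X =>
      dist p.2 x₀ + dist (p.1.1 x₀) (g₀.1 x₀)) (𝓝 (g₀, x₀)) (𝓝 0) := by
    have hcont : Continuous fun p : {f : X → Y // Isometry f} × X =>
        dist p.2 x₀ + dist (p.1.1 x₀) (g₀.1 x₀) :=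
      (continuous_snd.dist continuous_const).add
        (((continuous_isometry_apply x₀).comp continuous_fst).dist continuous_const)
    simpa using hcont.tendsto (g₀, x₀)
  refine squeeze_zero (fun _ => dist_nonneg) (fun ⟨g, x⟩ => ?_) hbound
  calc dist (g.1 x) (g₀.1 x₀) ≤ dist (g.1 x) (g.1 x₀) + dist (g.1 x₀) (g₀.1 x₀) :=
        dist_triangle _ _ _
    _ = dist x x₀ + dist (g.1 x₀) (g₀.1 x₀) := by rw [g.2.dist_eq]

variable [ProperSpace Y]

/-- Tychonoff: an isometry moving `x₀` by a bounded amount sends each `x` into a fixed closed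
ball, so these isometries form a closed subset of a product of compact balls. -/
lemma isCompact_isometry_dist_le (x₀ : X) (y₀ : Y) (c : ℝ) :
    IsCompact {g : {f : X → Y // Isometry f} | dist (g.1 x₀) y₀ ≤ c} := by
  have hballs : IsCompact (Subtype.val ⁻¹' pi univ fun x => closedBall y₀ (dist x x₀ + c) :
      Set {f : X → Y // Isometry f}) :=
    isClosed_setOf_isometry.isClosedEmbedding_subtypeVal.isCompact_preimage
      (isCompact_univ_pi fun _ => isCompact_closedBall _ _)
  have hclosed : IsClosed {g : {f : X → Y // Isometry f} | dist (g.1 x₀) y₀ ≤ c} :=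
    isClosed_le ((continuous_isometry_apply x₀).dist continuous_const) continuous_const
  refine hballs.of_isClosed_subset hclosed ?_
  intro g hg x _
  calc dist (g.1 x) y₀ ≤ dist (g.1 x) (g.1 x₀) + dist (g.1 x₀) y₀ := dist_triangle _ _ _
    _ ≤ dist x x₀ + c := by rw [g.2.dist_eq]; exact (add_le_add_iff_left _).2 hg

instance : WeaklyLocallyCompactSpace {f : X → Y // Isometry f} := by
  rcases isEmpty_or_nonempty X with _ | ⟨⟨x₀⟩⟩
  · infer_instance
  · refine ⟨fun g₀ => ⟨_, isCompact_isometry_dist_le x₀ (g₀.1 x₀) 1, ?_⟩⟩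
    exact (continuous_isometry_apply x₀).continuousAt.preimage_mem_nhds
      (closedBall_mem_nhds (g₀.1 x₀) one_pos)

end Isometries

theorem isProperMap_isometry_eval_prod {X Y : Type*} [MetricSpace X] [ProperSpace X]
    [MetricSpace Y] [ProperSpace Y] :
    IsProperMap fun p : {f : X → Y // Isometry f} × X => (p.1.1 p.2, p.2) := by
  have hcont : Continuous fun p : {f : X → Y // Isometry f} × X => (p.1.1 p.2, p.2) :=
    continuous_isometry_eval.prodMk continuous_snd
  refine isProperMap_iff_isCompact_preimage.2 ⟨hcont, fun K hK => ?_⟩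
  rcases K.eq_empty_or_nonempty with rfl | ⟨⟨y₀, x₀⟩, -⟩
  · simp
  obtain ⟨r, hr⟩ := hK.isBounded.subset_closedBall (y₀, x₀)
  refine ((isCompact_isometry_dist_le x₀ y₀ (2 * r)).prod (isCompact_closedBall x₀ r))
    |>.of_isClosed_subset (hK.isClosed.preimage hcont) ?_
  rintro ⟨g, x⟩ hgx
  obtain ⟨hgy, hx⟩ : dist (g.1 x) y₀ ≤ r ∧ dist x x₀ ≤ r := by
    simpa [Prod.dist_eq] using hr hgx
  refine ⟨?_, hx⟩
  calc dist (g.1 x₀) y₀ ≤ dist (g.1 x₀) (g.1 x) + dist (g.1 x) y₀ := dist_triangle _ _ _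
    _ = dist x x₀ + dist (g.1 x) y₀ := by rw [g.2.dist_eq, dist_comm]
    _ ≤ 2 * r := by linarith

/-- For a proper metric space `X`, the map `IE(X) × X → X × X`, `(g,x) ↦ (gx, x)`, is
proper, where `IE(X)` carries the topology of pointwise convergence. In particular,
`IE(X)` is locally compact. -/
theorem stmt_14 {X : Type*} [MetricSpace X] [ProperSpace X] :
    IsProperMap (fun p : {f : X → X // Isometry f} × X => (p.1.1 p.2, p.2)) ∧
      LocallyCompactSpace {f : X → X // Isometry f} :=
  ⟨isProperMap_isometry_eval_prod, inferInstance⟩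
end

section
/- Let X be a proper metric space. Then the group Iso(X) of surjective isometries of X is a closed subset of the monoid IE(X) of isometric embeddings of X, in the topology of pointwise convergence. -/
open Filter Topology

/-! If isometries `f i` converge pointwise to `g` and eventually hit `y`, their preimages `c i`
of `y` stay in a bounded, hence relatively compact, set. Along an ultrafilter they converge to
some `x`, and since each `f i` is an isometry, `y = f i (c i)` converges to `g x`. -/

theorem mem_range_of_tendsto_isometry {ι X Y : Type*} [PseudoMetricSpace X] [ProperSpace X]
    [MetricSpace Y] {l : Filter ι} [l.NeBot] {f : ι → X → Y} {g : X → Y}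
    (hf : ∀ i, Isometry (f i)) (hfg : ∀ x, Tendsto (fun i => f i x) l (𝓝 (g x))) {y : Y}
    (hy : ∀ᶠ i in l, y ∈ Set.range (f i)) : y ∈ Set.range g := by
  obtain ⟨-, x₀, -⟩ := hy.exists
  have hpre : ∀ i, ∃ x, y ∈ Set.range (f i) → f i x = y := fun i =>
    (em _).elim (fun ⟨x, hx⟩ => ⟨x, fun _ => hx⟩) fun h => ⟨x₀, (absurd · h)⟩
  choose c hc using hpre
  have hcy : ∀ᶠ i in l, f i (c i) = y := hy.mono hc
  have hbounded : ∀ᶠ i in l, c i ∈ Metric.closedBall x₀ (dist y (g x₀) + 1) := by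
    have hnear : ∀ᶠ i in l, dist y (f i x₀) < dist y (g x₀) + 1 :=
      (tendsto_const_nhds.dist (hfg x₀)).eventually (gt_mem_nhds (lt_add_one _))
    filter_upwards [hcy, hnear] with i hi hi'
    rw [Metric.mem_closedBall, ← (hf i).dist_eq, hi]
    exact hi'.le
  set U := Ultrafilter.of l
  have hUl : (U : Filter ι) ≤ l := Ultrafilter.of_le l
  obtain ⟨x, -, hcx⟩ := (isCompact_closedBall x₀ _).ultrafilter_le_nhds (Ultrafilter.map c U)
    (le_principal_iff.mpr (hUl hbounded))
  have hlim : Tendsto (fun i => f i (c i)) U (𝓝 (g x)) := by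
    refine ((hfg x).mono_left hUl).congr_dist ?_
    simp_rw [(hf _).dist_eq, dist_comm x]
    exact tendsto_iff_dist_tendsto_zero.mp hcx
  have hconst : Tendsto (fun i => f i (c i)) U (𝓝 y) :=
    tendsto_const_nhds.congr' ((hcy.filter_mono hUl).mono fun _ h => h.symm)
  exact ⟨x, tendsto_nhds_unique hlim hconst⟩

/-- For a proper metric space `X`, the group `Iso(X)` of surjective isometries is
closed in the monoid `IE(X)` of isometric embeddings, in the topology of pointwise
convergence. -/
theorem stmt_15 {X : Type*} [MetricSpace X] [ProperSpace X] :
    IsClosed {g : {f : X → X // Isometry f} | Function.Surjective g.1} := by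
  refine isClosed_iff_clusterPt.mpr fun g hg y => ?_
  set S := {g : {f : X → X // Isometry f} | Function.Surjective g.1}
  have : (𝓝 g ⊓ 𝓟 S).NeBot := hg
  have hS : ∀ᶠ i in 𝓝 g ⊓ 𝓟 S, i ∈ S := mem_inf_of_right (mem_principal_self S)
  refine mem_range_of_tendsto_isometry (f := fun i : {f : X → X // Isometry f} => i.1)
    (fun i => i.2) (fun x => ?_) (hS.mono fun i hi => hi y)
  exact ((continuous_apply x).comp continuous_subtype_val).continuousAt.tendsto.mono_left
    inf_le_left
end
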